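/- arXiv:2308.03455 — 2 statements merged into one kernel-verified Lean document; each statement's English description precedes it below -/
import Mathlib

section
/- Fix i ∈ {1,…,ℓ} and decompose the fiber g⁻¹({b_i}) = C_m^i ∪ C_M^i ∪ R^i ∪ E_m^i ∪ E_M^i, where C_m^i (resp. C_M^i) is the set of interior points of [α,β] in the fiber that are strict local minima (resp. strict local maxima) of g, R^i is the set of interior points in the fiber with g′ ≠ 0, and E_m^i (resp. E_M^i) is the set of endpoints α, β in the fiber that are local minima (resp. local maxima) of g. Then for every y ∈ (b_{i−1}, b_i), #I(y) = #g⁻¹({b_i}) − #C_m^i + #C_M^i − #E_m^i. -/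
/-- The index set `I(y)` of monotonicity pieces `A_j` whose image contains `y`,
where `A_j = [α_{j-1}, α_j)` for `j < k` and `A_k = [α_{k-1}, α_k]`. -/
def IdxSet (g : ℝ → ℝ) (a : ℕ → ℝ) (k : ℕ) (y : ℝ) : Set ℕ :=
  {j | 1 ≤ j ∧ j ≤ k ∧
    ∃ x ∈ (if j = k then Set.Icc (a (k - 1)) (a k) else Set.Ico (a (j - 1)) (a j)), g x = y}

theorem stmt13
    (α β : ℝ) (hαβ : α < β)
    (k : ℕ) (hk : 0 < k)
    (a : ℕ → ℝ) (ha0 : a 0 = α) (hak : a k = β)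
    (hamono : ∀ j < k, a j < a (j + 1))
    (g g' : ℝ → ℝ)
    (hderiv : ∀ x ∈ Set.Icc α β, HasDerivWithinAt g (g' x) (Set.Icc α β) x)
    (hg'cont : ContinuousOn g' (Set.Icc α β))
    (hpiece : ∀ j, 1 ≤ j → j ≤ k →
      StrictMonoOn g (Set.Ioo (a (j - 1)) (a j)) ∨ StrictAntiOn g (Set.Ioo (a (j - 1)) (a j)))
    (hg'ne : ∀ j, 1 ≤ j → j ≤ k → ∀ x ∈ Set.Ioo (a (j - 1)) (a j), g' x ≠ 0)
    (hcrit : ∀ j, 0 < j → j < k → g' (a j) = 0 ∧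
      ((∀ᶠ x in nhdsWithin (a j) (Set.Icc α β \ {a j}), g x < g (a j)) ∨
       (∀ᶠ x in nhdsWithin (a j) (Set.Icc α β \ {a j}), g (a j) < g x)))
    (ℓ : ℕ) (b : ℕ → ℝ)
    (hbmono : ∀ i < ℓ, b i < b (i + 1))
    (hB : g '' {x | ∃ j ≤ k, a j = x} = {y | ∃ i ≤ ℓ, b i = y})
    (i : ℕ) (hi1 : 1 ≤ i) (hiℓ : i ≤ ℓ)
    (Cm CM R Em EM : Set ℝ)
    (hCm : Cm = {x | x ∈ Set.Ioo α β ∧ g x = b i ∧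
      ∀ᶠ z in nhdsWithin x (Set.Icc α β \ {x}), g x < g z})
    (hCM : CM = {x | x ∈ Set.Ioo α β ∧ g x = b i ∧
      ∀ᶠ z in nhdsWithin x (Set.Icc α β \ {x}), g z < g x})
    (hR : R = {x | x ∈ Set.Ioo α β ∧ g x = b i ∧ g' x ≠ 0})
    (hEm : Em = {x | (x = α ∨ x = β) ∧ g x = b i ∧
      ∀ᶠ z in nhdsWithin x (Set.Icc α β), g x ≤ g z})
    (hEM : EM = {x | (x = α ∨ x = β) ∧ g x = b i ∧
      ∀ᶠ z in nhdsWithin x (Set.Icc α β), g z ≤ g x})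
 :
    ∀ y ∈ Set.Ioo (b (i - 1)) (b i),
      ((IdxSet g a k y).ncard : ℤ) =
        ({x ∈ Set.Icc α β | g x = b i}.ncard : ℤ) - Cm.ncard + CM.ncard - Em.ncard := by
  intro y hy
  obtain ⟨hy1, hy2⟩ := hy
  -- monotonicity of the partition points
  have hale : ∀ p q : ℕ, p ≤ q → q ≤ k → a p ≤ a q := by
    intro p q hpq hqk
    induction q with
    | zero => simp_all
    | succ n ih =>
      rcases Nat.lt_or_ge p (n+1) with h | h
      · exact le_trans (ih (by omega) (by omega)) (hamono n (by omega)).le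
      · have : p = n + 1 := by omega
        simp [this]
  have halt : ∀ p q : ℕ, p < q → q ≤ k → a p < a q := by
    intro p q hpq hqk
    have : a (p+1) ≤ a q := hale _ _ (by omega) hqk
    exact lt_of_lt_of_le (hamono p (by omega)) this
  have ha_inj : ∀ p q : ℕ, p ≤ k → q ≤ k → a p = a q → p = q := by
    intro p q hp hq h
    rcases Nat.lt_trichotomy p q with h' | h' | h'
    · exact absurd h (ne_of_lt (halt _ _ h' hq))
    · exact h'
    · exact absurd h.symm (ne_of_lt (halt _ _ h' hp))
  have haIcc : ∀ j, j ≤ k → a j ∈ Set.Icc α β := by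
    intro j hj
    constructor
    · rw [← ha0]; exact hale 0 j (by omega) hj
    · rw [← hak]; exact hale j k hj le_rfl
  have hjlt : ∀ j : ℕ, 1 ≤ j → j ≤ k → a (j-1) < a j := by
    intro j h1 h2
    have := halt (j-1) j (by omega) h2
    exact this
  have hsubIcc : ∀ j : ℕ, 1 ≤ j → j ≤ k → Set.Icc (a (j-1)) (a j) ⊆ Set.Icc α β := by
    intro j h1 h2
    apply Set.Icc_subset_Icc
    · rw [← ha0]; exact hale 0 (j-1) (by omega) (by omega)
    · rw [← hak]; exact hale j k h2 le_rfl
  have gcont : ContinuousOn g (Set.Icc α β) := fun x hx => (hderiv x hx).continuousWithinAt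
  -- b facts
  have hble : ∀ s t : ℕ, s ≤ t → t ≤ ℓ → b s ≤ b t := by
    intro s t hst htl
    induction t with
    | zero => simp_all
    | succ n ih =>
      rcases Nat.lt_or_ge s (n+1) with h | h
      · exact le_trans (ih (by omega) (by omega)) (hbmono n (by omega)).le
      · have : s = n + 1 := by omega
        simp [this]
  have hbB : ∀ j, j ≤ k → ∃ t, t ≤ ℓ ∧ b t = g (a j) := by
    intro j hj
    have : g (a j) ∈ g '' {x | ∃ j ≤ k, a j = x} := ⟨a j, ⟨j, hj, rfl⟩, rfl⟩
    rw [hB] at this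
    obtain ⟨t, ht, h⟩ := this
    exact ⟨t, ht, h⟩
  have hBsplit : ∀ v : ℝ, (∃ t, t ≤ ℓ ∧ b t = v) → v ≤ b (i-1) ∨ b i ≤ v := by
    intro v ⟨t, htl, ht⟩
    rcases Nat.lt_or_ge t i with h | h
    · left; rw [← ht]; exact hble t (i-1) (by omega) (by omega)
    · right; rw [← ht]; exact hble i t h htl
  have hsplit : ∀ j, j ≤ k → g (a j) ≤ b (i-1) ∨ b i ≤ g (a j) := fun j hj => hBsplit _ (hbB j hj)
  have hyne : ∀ j, j ≤ k → g (a j) ≠ y := by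
    intro j hj
    rcases hsplit j hj with h | h
    · exact ne_of_lt (lt_of_le_of_lt h hy1)
    · exact ne_of_gt (lt_of_lt_of_le hy2 h)
  -- closed-piece strict monotonicity
  have hpieceCC : ∀ j, 1 ≤ j → j ≤ k →
      StrictMonoOn g (Set.Icc (a (j-1)) (a j)) ∨ StrictAntiOn g (Set.Icc (a (j-1)) (a j)) := by
    intro j h1 h2
    have hcd : a (j-1) < a j := hjlt j h1 h2
    have hsub : Set.Icc (a (j-1)) (a j) ⊆ Set.Icc α β := hsubIcc j h1 h2
    have hIoosub : Set.Ioo (a (j-1)) (a j) ⊆ Set.Ioo α β := by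
      intro x hx
      have h1' := (hsub (Set.left_mem_Icc.2 hcd.le)).1
      have h2' := (hsub (Set.right_mem_Icc.2 hcd.le)).2
      exact ⟨lt_of_le_of_lt h1' hx.1, lt_of_lt_of_le hx.2 h2'⟩
    have hderiveq : ∀ x ∈ Set.Ioo (a (j-1)) (a j), deriv g x = g' x := by
      intro x hx
      have hx' := hIoosub hx
      exact ((hderiv x (Set.Ioo_subset_Icc_self hx')).hasDerivAt (Icc_mem_nhds hx'.1 hx'.2)).deriv
    have huIcc : ∀ x ∈ Set.Ioo (a (j-1)) (a j), ∀ x' ∈ Set.Ioo (a (j-1)) (a j),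
        Set.uIcc x x' ⊆ Set.Ioo (a (j-1)) (a j) :=
      fun x hx x' hx' => (Set.ordConnected_Ioo).uIcc_subset hx hx'
    have hnz : ∀ x ∈ Set.Ioo (a (j-1)) (a j), g' x ≠ 0 := hg'ne j h1 h2
    have hx0 : (a (j-1) + a j)/2 ∈ Set.Ioo (a (j-1)) (a j) := ⟨by linarith, by linarith⟩
    set x0 := (a (j-1) + a j)/2
    have key : ∀ x ∈ Set.Ioo (a (j-1)) (a j), (0 < g' x ↔ 0 < g' x0) := by
      intro x hx
      have hss : Set.uIcc x x0 ⊆ Set.Ioo (a (j-1)) (a j) := huIcc x hx x0 hx0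
      have hiv := intermediate_value_uIcc
        (hg'cont.mono (subset_trans hss (subset_trans Set.Ioo_subset_Icc_self hsub)))
      constructor
      · intro hp
        by_contra hneg
        have hneg' : g' x0 < 0 := lt_of_le_of_ne (not_lt.1 hneg) (hnz x0 hx0)
        have : (0:ℝ) ∈ Set.uIcc (g' x) (g' x0) := Set.mem_uIcc.2 (Or.inr ⟨hneg'.le, hp.le⟩)
        obtain ⟨z, hz, hz0⟩ := hiv this
        exact hnz z (hss hz) hz0
      · intro hp
        by_contra hneg
        have hneg' : g' x < 0 := lt_of_le_of_ne (not_lt.1 hneg) (hnz x hx)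
        have : (0:ℝ) ∈ Set.uIcc (g' x) (g' x0) := Set.mem_uIcc.2 (Or.inl ⟨hneg'.le, hp.le⟩)
        obtain ⟨z, hz, hz0⟩ := hiv this
        exact hnz z (hss hz) hz0
    rcases lt_or_gt_of_ne (hnz x0 hx0) with h | h
    · right
      apply strictAntiOn_of_deriv_neg (convex_Icc _ _) (gcont.mono hsub)
      intro x hx
      rw [interior_Icc] at hx
      rw [hderiveq x hx]
      rcases lt_or_gt_of_ne (hnz x hx) with h' | h'
      · exact h'
      · exact absurd ((key x hx).1 h') (not_lt.2 h.le)
    · left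
      apply strictMonoOn_of_deriv_pos (convex_Icc _ _) (gcont.mono hsub)
      intro x hx
      rw [interior_Icc] at hx
      rw [hderiveq x hx]
      rcases lt_or_gt_of_ne (hnz x hx) with h' | h'
      · exact absurd ((key x hx).2 h) (not_lt.2 h'.le)
      · exact h'
  have hinj : ∀ j, 1 ≤ j → j ≤ k → Set.InjOn g (Set.Icc (a (j-1)) (a j)) := by
    intro j h1 h2
    rcases hpieceCC j h1 h2 with h | h
    · exact h.injOn
    · exact h.injOn
  have hgne : ∀ j, 1 ≤ j → j ≤ k → g (a (j-1)) ≠ g (a j) := by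
    intro j h1 h2 h
    have := hinj j h1 h2 (Set.left_mem_Icc.2 (hjlt j h1 h2).le) (Set.right_mem_Icc.2 (hjlt j h1 h2).le) h
    exact absurd this (ne_of_lt (hjlt j h1 h2))

  -- image of a closed piece
  have himage : ∀ j, 1 ≤ j → j ≤ k → g '' Set.Icc (a (j-1)) (a j) =
      Set.Icc (min (g (a (j-1))) (g (a j))) (max (g (a (j-1))) (g (a j))) := by
    intro j h1 h2
    have hcd : a (j-1) < a j := hjlt j h1 h2
    have hsub : Set.Icc (a (j-1)) (a j) ⊆ Set.Icc α β := hsubIcc j h1 h2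
    have hcont : ContinuousOn g (Set.Icc (a (j-1)) (a j)) := gcont.mono hsub
    rcases hpieceCC j h1 h2 with hm | hm
    · have hle : g (a (j-1)) < g (a j) :=
        hm (Set.left_mem_Icc.2 hcd.le) (Set.right_mem_Icc.2 hcd.le) hcd
      rw [min_eq_left hle.le, max_eq_right hle.le]
      apply Set.Subset.antisymm
      · rintro v ⟨x, hx, rfl⟩
        exact ⟨hm.monotoneOn (Set.left_mem_Icc.2 hcd.le) hx hx.1,
               hm.monotoneOn hx (Set.right_mem_Icc.2 hcd.le) hx.2⟩
      · exact intermediate_value_Icc hcd.le hcont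
    · have hle : g (a j) < g (a (j-1)) :=
        hm (Set.left_mem_Icc.2 hcd.le) (Set.right_mem_Icc.2 hcd.le) hcd
      rw [min_eq_right hle.le, max_eq_left hle.le]
      apply Set.Subset.antisymm
      · rintro v ⟨x, hx, rfl⟩
        exact ⟨hm.antitoneOn hx (Set.right_mem_Icc.2 hcd.le) hx.2,
               hm.antitoneOn (Set.left_mem_Icc.2 hcd.le) hx hx.1⟩
      · exact intermediate_value_Icc' hcd.le hcont
  -- one sided filters
  have hNBr : ∀ c d : ℝ, c < d → (nhdsWithin c (Set.Ioo c d)).NeBot := by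
    intro c d h
    rw [← mem_closure_iff_nhdsWithin_neBot, closure_Ioo h.ne]
    exact Set.left_mem_Icc.2 h.le
  have hNBl : ∀ c d : ℝ, c < d → (nhdsWithin d (Set.Ioo c d)).NeBot := by
    intro c d h
    rw [← mem_closure_iff_nhdsWithin_neBot, closure_Ioo h.ne]
    exact Set.right_mem_Icc.2 h.le
  have hNBI : ∀ x ∈ Set.Icc α β, (nhdsWithin x (Set.Icc α β)).NeBot := by
    intro x hx
    rw [← mem_closure_iff_nhdsWithin_neBot]
    exact subset_closure hx
  -- a helper to refute eventual statements using a one-sided filter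
  have hrefute : ∀ (x : ℝ) (S : Set ℝ) (L : Filter ℝ) (P : ℝ → Prop), L.NeBot →
      L ≤ nhdsWithin x S → (∀ᶠ z in nhdsWithin x S, P z) → (∀ᶠ z in L, ¬ P z) → False := by
    intro x S L P hNB hle hev hnev
    exact ((hnev.and (hev.filter_mono hle)).exists).elim (fun z hz => hz.1 hz.2)
  have hssub : ∀ j, 1 ≤ j → j ≤ k → ∀ x ∈ Set.Icc (a (j-1)) (a j),
      Set.Ioo (a (j-1)) (a j) \ {x} ⊆ Set.Icc α β \ {x} := by
    intro j h1 h2 x hx z hz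
    exact ⟨hsubIcc j h1 h2 (Set.Ioo_subset_Icc_self hz.1), hz.2⟩
  -- cover of [α,β] by closed pieces
  have hcover : ∀ x ∈ Set.Icc α β, ∃ j, 1 ≤ j ∧ j ≤ k ∧ x ∈ Set.Icc (a (j-1)) (a j) := by
    intro x hx
    have hex : ∃ j, j ≤ k ∧ x ≤ a j := ⟨k, le_rfl, hak ▸ hx.2⟩
    classical
    have hex' : ∃ j, x ≤ a j ∧ j ≤ k := ⟨k, hak ▸ hx.2, le_rfl⟩
    by_cases h0 : x ≤ a 0
    · refine ⟨1, le_rfl, hk, ?_, ?_⟩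
      · simpa using le_antisymm h0 (ha0 ▸ hx.1) |>.ge
      · have : x = a 0 := le_antisymm h0 (ha0 ▸ hx.1)
        rw [this]
        exact hale 0 1 (by omega) hk
    · have hexP : ∃ j, x ≤ a j := ⟨k, hak ▸ hx.2⟩
      set j0 := Nat.find hexP with hj0
      have hj0spec : x ≤ a j0 := Nat.find_spec hexP
      have hj0min : ∀ m, m < j0 → ¬ x ≤ a m := fun m hm => Nat.find_min hexP hm
      have hj0pos : 1 ≤ j0 := by
        rcases Nat.eq_zero_or_pos j0 with h | h
        · exact absurd (h ▸ hj0spec) h0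
        · exact h
      have hj0k : j0 ≤ k := by
        by_contra hh
        exact hj0min k (by omega) (hak ▸ hx.2)
      exact ⟨j0, hj0pos, hj0k, (not_le.1 (hj0min (j0-1) (by omega))).le, hj0spec⟩

  -- generic one-sided refutation of eventual claims
  have href2 : ∀ (c d x : ℝ) (P : ℝ → Prop), c < d → (x = c ∨ x = d) →
      Set.Ioo c d ⊆ Set.Icc α β → (∀ z ∈ Set.Ioo c d, ¬ P z) →
      ((∀ᶠ z in nhdsWithin x (Set.Icc α β \ {x}), P z) ∨
       (∀ᶠ z in nhdsWithin x (Set.Icc α β), P z)) → False := by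
    intro c d x P hcd hx hsub hnP hev
    have hNB : (nhdsWithin x (Set.Ioo c d)).NeBot := by
      rcases hx with rfl | rfl
      · exact hNBr _ _ hcd
      · exact hNBl _ _ hcd
    have hnev : ∀ᶠ z in nhdsWithin x (Set.Ioo c d), ¬ P z :=
      Filter.eventually_of_mem self_mem_nhdsWithin hnP
    rcases hev with hev | hev
    · have h1 : nhdsWithin x (Set.Ioo c d) ≤ nhdsWithin x (Set.Icc α β \ {x}) := by
        apply nhdsWithin_mono
        intro z hz
        refine ⟨hsub hz, ?_⟩
        rcases hx with rfl | rfl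
        · exact ne_of_gt hz.1
        · exact ne_of_lt hz.2
      exact hrefute x _ _ P hNB h1 hev hnev
    · exact hrefute x _ _ P hNB (nhdsWithin_mono _ hsub) hev hnev
  -- no strict local extrema inside open pieces
  have hopen_not : ∀ j, 1 ≤ j → j ≤ k → ∀ x ∈ Set.Ioo (a (j-1)) (a j),
      ¬(∀ᶠ z in nhdsWithin x (Set.Icc α β \ {x}), g x < g z) ∧
      ¬(∀ᶠ z in nhdsWithin x (Set.Icc α β \ {x}), g z < g x) := by
    intro j h1 h2 x hx
    have hxI : x ∈ Set.Icc (a (j-1)) (a j) := Set.Ioo_subset_Icc_self hx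
    have hsubL : Set.Ioo (a (j-1)) x ⊆ Set.Icc α β := fun z hz =>
      hsubIcc j h1 h2 ⟨hz.1.le, le_trans hz.2.le hxI.2⟩
    have hsubR : Set.Ioo x (a j) ⊆ Set.Icc α β := fun z hz =>
      hsubIcc j h1 h2 ⟨le_trans hxI.1 hz.1.le, hz.2.le⟩
    have hmemL : ∀ z ∈ Set.Ioo (a (j-1)) x, z ∈ Set.Icc (a (j-1)) (a j) :=
      fun z hz => ⟨hz.1.le, le_trans hz.2.le hxI.2⟩
    have hmemR : ∀ z ∈ Set.Ioo x (a j), z ∈ Set.Icc (a (j-1)) (a j) :=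
      fun z hz => ⟨le_trans hxI.1 hz.1.le, hz.2.le⟩
    rcases hpieceCC j h1 h2 with hm | hm
    · constructor
      · intro hev
        exact href2 (a (j-1)) x x _ hx.1 (Or.inr rfl) hsubL
          (fun z hz => not_lt.2 (hm (hmemL z hz) hxI hz.2).le) (Or.inl hev)
      · intro hev
        exact href2 x (a j) x _ hx.2 (Or.inl rfl) hsubR
          (fun z hz => not_lt.2 (hm hxI (hmemR z hz) hz.1).le) (Or.inl hev)
    · constructor
      · intro hev
        exact href2 x (a j) x _ hx.2 (Or.inl rfl) hsubR
          (fun z hz => not_lt.2 (hm hxI (hmemR z hz) hz.1).le) (Or.inl hev)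
      · intro hev
        exact href2 (a (j-1)) x x _ hx.1 (Or.inr rfl) hsubL
          (fun z hz => not_lt.2 (hm (hmemL z hz) hxI hz.2).le) (Or.inl hev)
  -- every interior point is in an open piece or is an interior partition point
  have hloc : ∀ x ∈ Set.Ioo α β,
      (∃ j, 1 ≤ j ∧ j ≤ k ∧ x ∈ Set.Ioo (a (j-1)) (a j)) ∨
      (∃ t, 0 < t ∧ t < k ∧ x = a t) := by
    intro x hx
    obtain ⟨j, h1, h2, hxm⟩ := hcover x (Set.Ioo_subset_Icc_self hx)
    rcases eq_or_lt_of_le hxm.1 with he | hlt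
    · right
      refine ⟨j-1, ?_, by omega, he.symm⟩
      rcases Nat.eq_zero_or_pos (j-1) with h | h
      · rw [h] at he; rw [← he, ha0] at hx; exact absurd hx.1 (lt_irrefl _)
      · exact h
    · rcases eq_or_lt_of_le hxm.2 with he | hlt2
      · right
        refine ⟨j, by omega, ?_, he⟩
        rcases eq_or_lt_of_le h2 with h | h
        · rw [h] at he; rw [he, hak] at hx; exact absurd hx.2 (lt_irrefl _)
        · exact h
      · left; exact ⟨j, h1, h2, hlt, hlt2⟩
  -- strict bounds for values at interior points of pieces
  have hval : ∀ j, 1 ≤ j → j ≤ k → ∀ x ∈ Set.Ioo (a (j-1)) (a j),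
      min (g (a (j-1))) (g (a j)) < g x ∧ g x < max (g (a (j-1))) (g (a j)) := by
    intro j h1 h2 x hx
    have hxI : x ∈ Set.Icc (a (j-1)) (a j) := Set.Ioo_subset_Icc_self hx
    have hmem : g x ∈ Set.Icc (min (g (a (j-1))) (g (a j))) (max (g (a (j-1))) (g (a j))) := by
      rw [← himage j h1 h2]; exact ⟨x, hxI, rfl⟩
    have hne1 : g x ≠ g (a (j-1)) := fun h => absurd
      (hinj j h1 h2 hxI (Set.left_mem_Icc.2 (hjlt j h1 h2).le) h) (ne_of_gt hx.1)
    have hne2 : g x ≠ g (a j) := fun h => absurd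
      (hinj j h1 h2 hxI (Set.right_mem_Icc.2 (hjlt j h1 h2).le) h) (ne_of_lt hx.2)
    constructor
    · refine lt_of_le_of_ne hmem.1 ?_
      rcases min_choice (g (a (j-1))) (g (a j)) with h | h <;> rw [h]
      · exact fun hh => hne1 hh.symm
      · exact fun hh => hne2 hh.symm
    · refine lt_of_le_of_ne hmem.2 ?_
      rcases max_choice (g (a (j-1))) (g (a j)) with h | h <;> rw [h]
      · exact hne1
      · exact hne2

  classical
  -- the index finsets
  set J1 : Finset ℕ := (Finset.Icc 1 k).filter
    (fun j => min (g (a (j-1))) (g (a j)) < b i ∧ b i < max (g (a (j-1))) (g (a j))) with hJ1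
  set J2 : Finset ℕ := (Finset.Icc 1 k).filter
    (fun j => max (g (a (j-1))) (g (a j)) = b i) with hJ2
  -- Mv and mv belong to B in the split sense
  have hsplitm : ∀ j, 1 ≤ j → j ≤ k →
      (min (g (a (j-1))) (g (a j)) ≤ b (i-1) ∨ b i ≤ min (g (a (j-1))) (g (a j))) ∧
      (max (g (a (j-1))) (g (a j)) ≤ b (i-1) ∨ b i ≤ max (g (a (j-1))) (g (a j))) := by
    intro j h1 h2
    constructor
    · rcases min_choice (g (a (j-1))) (g (a j)) with h | h <;> rw [h]
      · exact hsplit (j-1) (by omega)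
      · exact hsplit j h2
    · rcases max_choice (g (a (j-1))) (g (a j)) with h | h <;> rw [h]
      · exact hsplit (j-1) (by omega)
      · exact hsplit j h2
  -- characterization of the index set
  have hIdx : IdxSet g a k y = ↑(J1 ∪ J2) := by
    ext j
    simp only [IdxSet, Set.mem_setOf_eq, Finset.coe_union, Set.mem_union, Finset.mem_coe,
      hJ1, hJ2, Finset.mem_filter, Finset.mem_Icc]
    constructor
    · rintro ⟨h1, h2, x, hxmem, hgx⟩
      have hxI : x ∈ Set.Icc (a (j-1)) (a j) := by
        by_cases hjk : j = k
        · rw [if_pos hjk] at hxmem; rw [hjk]; exact hxmem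
        · rw [if_neg hjk] at hxmem; exact Set.Ico_subset_Icc_self hxmem
      have hyI : y ∈ Set.Icc (min (g (a (j-1))) (g (a j))) (max (g (a (j-1))) (g (a j))) := by
        rw [← himage j h1 h2]; exact ⟨x, hxI, hgx⟩
      have hmv : min (g (a (j-1))) (g (a j)) < b i := lt_of_le_of_lt hyI.1 hy2
      have hMv : b i ≤ max (g (a (j-1))) (g (a j)) := by
        rcases (hsplitm j h1 h2).2 with h | h
        · exact absurd (lt_of_lt_of_le hy1 hyI.2) (not_lt.2 h)
        · exact h
      rcases eq_or_lt_of_le hMv with he | hlt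
      · right; exact ⟨⟨h1, h2⟩, he.symm⟩
      · left; exact ⟨⟨h1, h2⟩, hmv, hlt⟩
    · intro hj
      have h1 : 1 ≤ j := by rcases hj with ⟨⟨h, _⟩, _⟩ | ⟨⟨h, _⟩, _⟩ <;> exact h
      have h2 : j ≤ k := by rcases hj with ⟨⟨_, h⟩, _⟩ | ⟨⟨_, h⟩, _⟩ <;> exact h
      have hmv : min (g (a (j-1))) (g (a j)) < b i := by
        rcases hj with ⟨_, h, _⟩ | ⟨_, h⟩
        · exact h
        · exact h ▸ min_lt_max.2 (hgne j h1 h2)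
      have hMv : b i ≤ max (g (a (j-1))) (g (a j)) := by
        rcases hj with ⟨_, _, h⟩ | ⟨_, h⟩
        · exact h.le
        · exact h.ge
      have hmvle : min (g (a (j-1))) (g (a j)) ≤ b (i-1) := by
        rcases (hsplitm j h1 h2).1 with h | h
        · exact h
        · exact absurd hmv (not_lt.2 h)
      have hyI : y ∈ Set.Icc (min (g (a (j-1))) (g (a j))) (max (g (a (j-1))) (g (a j))) :=
        ⟨le_trans hmvle hy1.le, le_trans hy2.le hMv⟩
      rw [← himage j h1 h2] at hyI
      obtain ⟨x, hxI, hgx⟩ := hyI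
      refine ⟨h1, h2, x, ?_, hgx⟩
      by_cases hjk : j = k
      · rw [if_pos hjk]; rw [hjk] at hxI; exact hxI
      · rw [if_neg hjk]
        refine ⟨hxI.1, lt_of_le_of_ne hxI.2 ?_⟩
        intro he
        exact hyne j h2 (he ▸ hgx)

  set F : Set ℝ := {x ∈ Set.Icc α β | g x = b i} with hFdef
  -- punctured neighborhood filters are nontrivial
  have hNBp : ∀ x ∈ Set.Icc α β, (nhdsWithin x (Set.Icc α β \ {x})).NeBot := by
    intro x hx
    rcases lt_or_ge x β with h | h
    · have := hNBr x β h
      exact Filter.neBot_of_le (nhdsWithin_mono x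
        (show Set.Ioo x β ⊆ Set.Icc α β \ {x} from
          fun z hz => ⟨⟨le_trans hx.1 hz.1.le, hz.2.le⟩, ne_of_gt hz.1⟩))
    · have hxb : x = β := le_antisymm hx.2 h
      have hax : α < x := hxb ▸ hαβ
      have := hNBl α x hax
      exact Filter.neBot_of_le (nhdsWithin_mono x
        (show Set.Ioo α x ⊆ Set.Icc α β \ {x} from
          fun z hz => ⟨⟨hz.1.le, le_trans hz.2.le hx.2⟩, ne_of_lt hz.2⟩))
  -- membership facts
  have hCmIoo : ∀ x ∈ Cm, x ∈ Set.Ioo α β := by rw [hCm]; exact fun x h => h.1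
  have hCMIoo : ∀ x ∈ CM, x ∈ Set.Ioo α β := by rw [hCM]; exact fun x h => h.1
  have hRIoo : ∀ x ∈ R, x ∈ Set.Ioo α β := by rw [hR]; exact fun x h => h.1
  have hEmend : ∀ x ∈ Em, x = α ∨ x = β := by rw [hEm]; exact fun x h => h.1
  have hEMend : ∀ x ∈ EM, x = α ∨ x = β := by rw [hEM]; exact fun x h => h.1
  have hend_not_int : ∀ x : ℝ, (x = α ∨ x = β) → x ∉ Set.Ioo α β := by
    rintro x (rfl | rfl) h
    · exact lt_irrefl _ h.1
    · exact lt_irrefl _ h.2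
  -- subsets of the fiber
  have hCmF : Cm ⊆ F := by
    rw [hCm]; rintro x ⟨hx, hgx, _⟩; exact ⟨Set.Ioo_subset_Icc_self hx, hgx⟩
  have hCMF : CM ⊆ F := by
    rw [hCM]; rintro x ⟨hx, hgx, _⟩; exact ⟨Set.Ioo_subset_Icc_self hx, hgx⟩
  have hRF : R ⊆ F := by
    rw [hR]; rintro x ⟨hx, hgx, _⟩; exact ⟨Set.Ioo_subset_Icc_self hx, hgx⟩
  have hEmF : Em ⊆ F := by
    rw [hEm]; rintro x ⟨(rfl | rfl), hgx, _⟩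
    · exact ⟨⟨le_rfl, hαβ.le⟩, hgx⟩
    · exact ⟨⟨hαβ.le, le_rfl⟩, hgx⟩
  have hEMF : EM ⊆ F := by
    rw [hEM]; rintro x ⟨(rfl | rfl), hgx, _⟩
    · exact ⟨⟨le_rfl, hαβ.le⟩, hgx⟩
    · exact ⟨⟨hαβ.le, le_rfl⟩, hgx⟩
  -- points of R lie in open pieces
  have hR_open : ∀ x ∈ R, ∃ j, 1 ≤ j ∧ j ≤ k ∧ x ∈ Set.Ioo (a (j-1)) (a j) := by
    intro x hx
    rw [hR] at hx
    rcases hloc x hx.1 with h | ⟨t, ht1, ht2, rfl⟩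
    · exact h
    · exact absurd (hcrit t ht1 ht2).1 hx.2.2
  -- endpoints of [α,β] in the fiber are in Em ∪ EM
  have h01 : a 0 < a 1 := by have := hjlt 1 le_rfl hk; simpa using this
  have hk1 : a (k-1) < a k := hjlt k hk le_rfl
  have hpiece1 : StrictMonoOn g (Set.Icc (a 0) (a 1)) ∨ StrictAntiOn g (Set.Icc (a 0) (a 1)) := by
    have := hpieceCC 1 le_rfl hk; simpa using this
  have hinj1 : Set.InjOn g (Set.Icc (a 0) (a 1)) := by
    have := hinj 1 le_rfl hk; simpa using this
  have hIoo1sub : Set.Ioo (a 0) (a 1) ⊆ Set.Icc α β := by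
    intro z hz
    have := hsubIcc 1 le_rfl hk
    simp only [Nat.sub_self] at this
    exact this (Set.Ioo_subset_Icc_self hz)
  have hIooksub : Set.Ioo (a (k-1)) (a k) ⊆ Set.Icc α β :=
    fun z hz => hsubIcc k hk le_rfl (Set.Ioo_subset_Icc_self hz)
  have hend_memα : g α = b i → α ∈ Em ∪ EM := by
    intro hgx
    have hmem : α ∈ Set.Iio (a 1) := by rw [← ha0]; exact h01
    have hIccmem : ∀ z, z ∈ Set.Iio (a 1) ∩ Set.Icc α β → z ∈ Set.Icc (a 0) (a 1) :=
      fun z hz => ⟨ha0 ▸ hz.2.1, hz.1.le⟩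
    rcases hpiece1 with hm | hm
    · left; rw [hEm]
      refine ⟨Or.inl rfl, hgx, ?_⟩
      rw [Filter.eventually_iff]
      apply mem_nhdsWithin.2
      refine ⟨Set.Iio (a 1), isOpen_Iio, hmem, ?_⟩
      intro z hz
      have := hm.monotoneOn (Set.left_mem_Icc.2 h01.le) (hIccmem z hz) (ha0 ▸ hz.2.1)
      simpa [ha0] using this
    · right; rw [hEM]
      refine ⟨Or.inl rfl, hgx, ?_⟩
      rw [Filter.eventually_iff]
      apply mem_nhdsWithin.2
      refine ⟨Set.Iio (a 1), isOpen_Iio, hmem, ?_⟩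
      intro z hz
      have := hm.antitoneOn (Set.left_mem_Icc.2 h01.le) (hIccmem z hz) (ha0 ▸ hz.2.1)
      simpa [ha0] using this
  have hend_memβ : g β = b i → β ∈ Em ∪ EM := by
    intro hgx
    have hmem : β ∈ Set.Ioi (a (k-1)) := by rw [← hak]; exact hk1
    have hIccmem : ∀ z, z ∈ Set.Ioi (a (k-1)) ∩ Set.Icc α β → z ∈ Set.Icc (a (k-1)) (a k) :=
      fun z hz => ⟨hz.1.le, hak ▸ hz.2.2⟩
    rcases hpieceCC k hk le_rfl with hm | hm
    · right; rw [hEM]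
      refine ⟨Or.inr rfl, hgx, ?_⟩
      rw [Filter.eventually_iff]
      apply mem_nhdsWithin.2
      refine ⟨Set.Ioi (a (k-1)), isOpen_Ioi, hmem, ?_⟩
      intro z hz
      have := hm.monotoneOn (hIccmem z hz) (Set.right_mem_Icc.2 hk1.le) (hak ▸ hz.2.2)
      simpa [hak] using this
    · left; rw [hEm]
      refine ⟨Or.inr rfl, hgx, ?_⟩
      rw [Filter.eventually_iff]
      apply mem_nhdsWithin.2
      refine ⟨Set.Ioi (a (k-1)), isOpen_Ioi, hmem, ?_⟩
      intro z hz
      have := hm.antitoneOn (hIccmem z hz) (Set.right_mem_Icc.2 hk1.le) (hak ▸ hz.2.2)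
      simpa [hak] using this
  have hend_mem : ∀ x : ℝ, (x = α ∨ x = β) → g x = b i → x ∈ Em ∪ EM := by
    intro x hxe hgx
    rcases hxe with hxa | hxb
    · rw [hxa] at hgx ⊢; exact hend_memα hgx
    · rw [hxb] at hgx ⊢; exact hend_memβ hgx
  -- cover of the fiber
  have hFcover : F ⊆ Cm ∪ (CM ∪ (R ∪ (Em ∪ EM))) := by
    intro x hx
    obtain ⟨hxI, hgx⟩ := hx
    by_cases hend : x = α ∨ x = β
    · rcases hend_mem x hend hgx with h | h
      · exact Or.inr (Or.inr (Or.inr (Or.inl h)))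
      · exact Or.inr (Or.inr (Or.inr (Or.inr h)))
    · push_neg at hend
      have hxIoo : x ∈ Set.Ioo α β :=
        ⟨lt_of_le_of_ne hxI.1 (Ne.symm hend.1), lt_of_le_of_ne hxI.2 hend.2⟩
      by_cases hg' : g' x = 0
      · rcases hloc x hxIoo with ⟨j, h1, h2, hj⟩ | ⟨t, ht1, ht2, rfl⟩
        · exact absurd hg' (hg'ne j h1 h2 x hj)
        · rcases (hcrit t ht1 ht2).2 with h | h
          · exact Or.inr (Or.inl (by rw [hCM]; exact ⟨hxIoo, hgx, h⟩))
          · exact Or.inl (by rw [hCm]; exact ⟨hxIoo, hgx, h⟩)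
      · exact Or.inr (Or.inr (Or.inl (by rw [hR]; exact ⟨hxIoo, hgx, hg'⟩)))
  have hFeq : F = Cm ∪ (CM ∪ (R ∪ (Em ∪ EM))) := by
    apply Set.Subset.antisymm hFcover
    intro x hx
    rcases hx with h | h | h | h | h
    · exact hCmF h
    · exact hCMF h
    · exact hRF h
    · exact hEmF h
    · exact hEMF h
  -- pairwise contradictions
  have hd_CmCM : ∀ x, x ∈ Cm → x ∈ CM → False := by
    intro x h h'
    have hNB := hNBp x (Set.Ioo_subset_Icc_self (hCmIoo x h))
    rw [hCm] at h; rw [hCM] at h'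
    exact ((h.2.2.and h'.2.2).exists).elim (fun z hz => absurd hz.1 (not_lt.2 hz.2.le))
  have hd_RCm : ∀ x, x ∈ R → x ∈ Cm → False := by
    intro x hxR hxC
    obtain ⟨j, h1, h2, hj⟩ := hR_open x hxR
    rw [hCm] at hxC
    exact (hopen_not j h1 h2 x hj).1 hxC.2.2
  have hd_RCM : ∀ x, x ∈ R → x ∈ CM → False := by
    intro x hxR hxC
    obtain ⟨j, h1, h2, hj⟩ := hR_open x hxR
    rw [hCM] at hxC
    exact (hopen_not j h1 h2 x hj).2 hxC.2.2
  have hd_EmEM : ∀ x, x ∈ Em → x ∈ EM → False := by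
    intro x hm hM
    have hxe := hEmend x hm
    rw [hEm] at hm; rw [hEM] at hM
    have hev : ∀ᶠ z in nhdsWithin x (Set.Icc α β), g z = g x :=
      (hM.2.2.and hm.2.2).mono (fun z hz => le_antisymm hz.1 hz.2)
    rcases hxe with hxa | hxb
    · rw [hxa] at hev
      refine href2 α (a 1) α (fun z => g z = g α) (ha0 ▸ h01) (Or.inl rfl)
        (fun z hz => hIoo1sub ⟨ha0 ▸ hz.1, hz.2⟩) ?_ (Or.inr hev)
      intro z hz heq
      have hzI : z ∈ Set.Icc (a 0) (a 1) := Set.Ioo_subset_Icc_self ⟨ha0 ▸ hz.1, hz.2⟩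
      have := hinj1 hzI (Set.left_mem_Icc.2 h01.le) (by rw [heq, ha0])
      rw [this, ha0] at hz
      exact lt_irrefl _ hz.1
    · rw [hxb] at hev
      refine href2 (a (k-1)) β β (fun z => g z = g β) (hak ▸ hk1) (Or.inr rfl)
        (fun z hz => hIooksub ⟨hz.1, hak ▸ hz.2⟩) ?_ (Or.inr hev)
      intro z hz heq
      have hzI : z ∈ Set.Icc (a (k-1)) (a k) := Set.Ioo_subset_Icc_self ⟨hz.1, hak ▸ hz.2⟩
      have := hinj k hk le_rfl hzI (Set.right_mem_Icc.2 hk1.le) (by rw [heq, hak])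
      rw [this, hak] at hz
      exact lt_irrefl _ hz.2
  -- finiteness of the fiber
  have hFfin : F.Finite := by
    have hsub : F ⊆ ⋃ j ∈ (Finset.Icc 1 k : Finset ℕ), (Set.Icc (a (j-1)) (a j) ∩ F) := by
      intro x hx
      obtain ⟨j, h1, h2, hj⟩ := hcover x hx.1
      exact Set.mem_biUnion (show j ∈ (Finset.Icc 1 k : Finset ℕ) from Finset.mem_Icc.2 ⟨h1, h2⟩) ⟨hj, hx⟩
    apply Set.Finite.subset _ hsub
    apply Set.Finite.biUnion (Finset.finite_toSet _)
    intro j hj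
    simp only [Finset.mem_coe, Finset.mem_Icc] at hj
    apply Set.Subsingleton.finite
    intro u hu v hv
    exact hinj j hj.1 hj.2 hu.1 hv.1 (hu.2.2.trans hv.2.2.symm)
  have hCmfin : Cm.Finite := hFfin.subset hCmF
  have hCMfin : CM.Finite := hFfin.subset hCMF
  have hRfin : R.Finite := hFfin.subset hRF
  have hEmfin : Em.Finite := hFfin.subset hEmF
  have hEMfin : EM.Finite := hFfin.subset hEMF
  -- ncard of the fiber
  have hdis4 : Disjoint Em EM := by
    rw [Set.disjoint_left]; exact fun {x} h h' => hd_EmEM x h h'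
  have hdis3 : Disjoint R (Em ∪ EM) := by
    rw [Set.disjoint_left]
    rintro x h (h' | h')
    · exact hend_not_int x (hEmend x h') (hRIoo x h)
    · exact hend_not_int x (hEMend x h') (hRIoo x h)
  have hdis2 : Disjoint CM (R ∪ (Em ∪ EM)) := by
    rw [Set.disjoint_left]
    rintro x h (h' | h' | h')
    · exact hd_RCM x h' h
    · exact hend_not_int x (hEmend x h') (hCMIoo x h)
    · exact hend_not_int x (hEMend x h') (hCMIoo x h)
  have hdis1 : Disjoint Cm (CM ∪ (R ∪ (Em ∪ EM))) := by
    rw [Set.disjoint_left]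
    rintro x h (h' | h' | h' | h')
    · exact hd_CmCM x h h'
    · exact hd_RCm x h' h
    · exact hend_not_int x (hEmend x h') (hCmIoo x h)
    · exact hend_not_int x (hEMend x h') (hCmIoo x h)
  have hFcard : F.ncard = Cm.ncard + (CM.ncard + (R.ncard + (Em.ncard + EM.ncard))) := by
    rw [hFeq]
    rw [Set.ncard_union_eq hdis1 hCmfin (hCMfin.union (hRfin.union (hEmfin.union hEMfin)))]
    rw [Set.ncard_union_eq hdis2 hCMfin (hRfin.union (hEmfin.union hEMfin))]
    rw [Set.ncard_union_eq hdis3 hRfin (hEmfin.union hEMfin)]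
    rw [Set.ncard_union_eq hdis4 hEmfin hEMfin]

  -- open pieces are pairwise disjoint
  have hIoodisj : ∀ j j' : ℕ, 1 ≤ j → j ≤ k → 1 ≤ j' → j' ≤ k → j ≠ j' → ∀ z : ℝ,
      z ∈ Set.Ioo (a (j-1)) (a j) → z ∈ Set.Ioo (a (j'-1)) (a j') → False := by
    have key : ∀ j j' : ℕ, 1 ≤ j → j ≤ k → 1 ≤ j' → j' ≤ k → j < j' → ∀ z : ℝ,
        z ∈ Set.Ioo (a (j-1)) (a j) → z ∈ Set.Ioo (a (j'-1)) (a j') → False := by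
      intro j j' h1 h2 h1' h2' hlt z hz hz'
      have : a j ≤ a (j'-1) := hale j (j'-1) (by omega) (by omega)
      exact absurd (lt_trans hz'.1 hz.2) (not_lt.2 this)
    intro j j' h1 h2 h1' h2' hne z hz hz'
    rcases Nat.lt_or_ge j j' with h | h
    · exact key j j' h1 h2 h1' h2' h z hz hz'
    · exact key j' j h1' h2' h1 h2 (by omega) z hz' hz
  -- g(a s) ≠ b i for endpoints of a J1 piece
  have hJ1spec : ∀ j ∈ J1, 1 ≤ j ∧ j ≤ k ∧
      min (g (a (j-1))) (g (a j)) < b i ∧ b i < max (g (a (j-1))) (g (a j)) := by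
    intro j hj
    rw [hJ1, Finset.mem_filter, Finset.mem_Icc] at hj
    exact ⟨hj.1.1, hj.1.2, hj.2.1, hj.2.2⟩
  -- for j ∈ J1 there is an interior fiber point
  have hch : ∀ j : ℕ, ∃ x : ℝ, j ∈ J1 →
      x ∈ R ∧ x ∈ Set.Ioo (a (j-1)) (a j) ∧ g x = b i := by
    intro j
    by_cases hj : j ∈ J1
    · obtain ⟨h1, h2, hmv, hMv⟩ := hJ1spec j hj
      have hbmem : b i ∈ Set.Icc (min (g (a (j-1))) (g (a j))) (max (g (a (j-1))) (g (a j))) :=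
        ⟨hmv.le, hMv.le⟩
      rw [← himage j h1 h2] at hbmem
      obtain ⟨x, hxI, hgx⟩ := hbmem
      have hne1 : g (a (j-1)) ≠ b i := by
        rcases le_or_gt (g (a (j-1))) (g (a j)) with h | h
        · rw [min_eq_left h] at hmv; exact ne_of_lt hmv
        · rw [max_eq_left h.le] at hMv; exact ne_of_gt hMv
      have hne2 : g (a j) ≠ b i := by
        rcases le_or_gt (g (a (j-1))) (g (a j)) with h | h
        · rw [max_eq_right h] at hMv; exact ne_of_gt hMv
        · rw [min_eq_right h.le] at hmv; exact ne_of_lt hmv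
      have hxIoo : x ∈ Set.Ioo (a (j-1)) (a j) := by
        constructor
        · rcases eq_or_lt_of_le hxI.1 with he | he
          · exact absurd (he ▸ hgx) hne1
          · exact he
        · rcases eq_or_lt_of_le hxI.2 with he | he
          · exact absurd (he ▸ hgx) hne2
          · exact he
      have hxIab : x ∈ Set.Ioo α β := by
        have hsub := hsubIcc j h1 h2
        exact ⟨lt_of_le_of_lt (hsub (Set.left_mem_Icc.2 (hjlt j h1 h2).le)).1 hxIoo.1,
               lt_of_lt_of_le hxIoo.2 (hsub (Set.right_mem_Icc.2 (hjlt j h1 h2).le)).2⟩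
      refine ⟨x, fun _ => ⟨?_, hxIoo, hgx⟩⟩
      rw [hR]
      exact ⟨hxIab, hgx, hg'ne j h1 h2 x hxIoo⟩
    · exact ⟨0, fun h => absurd h hj⟩
  choose f hf using hch
  -- R is the image of J1 under f
  have hRJ1 : R = f '' ↑J1 := by
    apply Set.Subset.antisymm
    · intro x hx
      obtain ⟨j, h1, h2, hj⟩ := hR_open x hx
      have hgx : g x = b i := by rw [hR] at hx; exact hx.2.1
      have hjJ1 : j ∈ J1 := by
        rw [hJ1, Finset.mem_filter, Finset.mem_Icc]
        have := hval j h1 h2 x hj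
        exact ⟨⟨h1, h2⟩, hgx ▸ this.1, hgx ▸ this.2⟩
      obtain ⟨hfR, hfIoo, hfval⟩ := hf j hjJ1
      have : f j = x := hinj j h1 h2 (Set.Ioo_subset_Icc_self hfIoo)
        (Set.Ioo_subset_Icc_self hj) (by rw [hfval, hgx])
      exact ⟨j, hjJ1, this⟩
    · rintro x ⟨j, hj, rfl⟩
      exact (hf j hj).1
  have hfinj : Set.InjOn f ↑J1 := by
    intro j hj j' hj' he
    by_contra hne
    have h1 := hJ1spec j hj
    have h2 := hJ1spec j' hj'
    exact hIoodisj j j' h1.1 h1.2.1 h2.1 h2.2.1 hne (f j)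
      (hf j hj).2.1 (he ▸ (hf j' hj').2.1)
  have hRcard : R.ncard = J1.card := by
    rw [hRJ1, Set.ncard_image_of_injOn hfinj, Set.ncard_coe_finset]

  -- the argmax endpoint map
  set φ : ℕ → ℝ := fun j => if g (a j) = b i then a j else a (j-1) with hφdef
  have hJ2spec : ∀ j ∈ J2, 1 ≤ j ∧ j ≤ k ∧ max (g (a (j-1))) (g (a j)) = b i := by
    intro j hj
    rw [hJ2, Finset.mem_filter, Finset.mem_Icc] at hj
    exact ⟨hj.1.1, hj.1.2, hj.2⟩
  have hJ2cases : ∀ j ∈ J2,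
      (g (a j) = b i ∧ g (a (j-1)) < b i) ∨ (g (a (j-1)) = b i ∧ g (a j) < b i) := by
    intro j hj
    obtain ⟨h1, h2, hM⟩ := hJ2spec j hj
    rcases max_choice (g (a (j-1))) (g (a j)) with h | h
    · right
      rw [h] at hM
      refine ⟨hM, ?_⟩
      have hle : g (a j) ≤ b i := by rw [← hM]; exact h ▸ le_max_right _ _
      exact lt_of_le_of_ne hle (fun he => hgne j h1 h2 (hM.trans he.symm))
    · left
      rw [h] at hM
      refine ⟨hM, ?_⟩
      have hle : g (a (j-1)) ≤ b i := by rw [← hM]; exact h ▸ le_max_left _ _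
      exact lt_of_le_of_ne hle (fun he => hgne j h1 h2 (he.trans hM.symm))
  -- upper bound of g on a piece
  have hub : ∀ j, 1 ≤ j → j ≤ k → ∀ z ∈ Set.Icc (a (j-1)) (a j),
      g z ≤ max (g (a (j-1))) (g (a j)) := by
    intro j h1 h2 z hz
    have : g z ∈ Set.Icc (min (g (a (j-1))) (g (a j))) (max (g (a (j-1))) (g (a j))) := by
      rw [← himage j h1 h2]; exact ⟨z, hz, rfl⟩
    exact this.2
  have hub1 : ∀ z ∈ Set.Icc (a 0) (a 1), g z ≤ max (g (a 0)) (g (a 1)) := by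
    have := hub 1 le_rfl hk; simpa using this
  -- membership in EM at the endpoints
  have hEMα : g (a 0) = b i → g (a 1) < b i → α ∈ EM := by
    intro hg0 hg1
    rw [hEM]
    refine ⟨Or.inl rfl, by rw [ha0] at hg0; exact hg0, ?_⟩
    rw [Filter.eventually_iff]
    apply mem_nhdsWithin.2
    refine ⟨Set.Iio (a 1), isOpen_Iio, by rw [← ha0]; exact h01, ?_⟩
    intro z hz
    have hzI : z ∈ Set.Icc (a 0) (a 1) := ⟨ha0 ▸ hz.2.1, hz.1.le⟩
    have := hub1 z hzI
    rw [max_eq_left (by rw [hg0]; exact hg1.le)] at this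
    simpa [ha0] using this
  have hEMβ : g (a k) = b i → g (a (k-1)) < b i → β ∈ EM := by
    intro hgk hgk1
    rw [hEM]
    refine ⟨Or.inr rfl, by rw [hak] at hgk; exact hgk, ?_⟩
    rw [Filter.eventually_iff]
    apply mem_nhdsWithin.2
    refine ⟨Set.Ioi (a (k-1)), isOpen_Ioi, by rw [← hak]; exact hk1, ?_⟩
    intro z hz
    have hzI : z ∈ Set.Icc (a (k-1)) (a k) := ⟨hz.1.le, hak ▸ hz.2.2⟩
    have := hub k hk le_rfl z hzI
    rw [max_eq_right (by rw [hgk]; exact hgk1.le)] at this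
    simpa [hak] using this
  -- subset facts for adjacent pieces of an interior node
  have hIoosubIcc : ∀ j, 1 ≤ j → j ≤ k → Set.Ioo (a (j-1)) (a j) ⊆ Set.Icc α β :=
    fun j h1 h2 z hz => hsubIcc j h1 h2 (Set.Ioo_subset_Icc_self hz)
  have hIoosubIcc' : ∀ t, t < k → Set.Ioo (a t) (a (t+1)) ⊆ Set.Icc α β := by
    intro t ht z hz
    have := hIoosubIcc (t+1) (by omega) (by omega)
    simpa using this hz
  have hjlt' : ∀ t, t < k → a t < a (t+1) := fun t ht => hamono t ht
  -- membership in CM for interior nodes that are tops of an adjacent piece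
  have hCMof : ∀ t, 0 < t → t < k → g (a t) = b i →
      ((∀ z ∈ Set.Ioo (a (t-1)) (a t), g z < g (a t)) ∨
       (∀ z ∈ Set.Ioo (a t) (a (t+1)), g z < g (a t))) →
      a t ∈ CM := by
    intro t ht1 ht2 hgt hside
    rw [hCM]
    refine ⟨⟨ha0 ▸ halt 0 t ht1 (by omega), hak ▸ halt t k ht2 le_rfl⟩, hgt, ?_⟩
    rcases (hcrit t ht1 ht2).2 with h | h
    · exact h
    · exfalso
      rcases hside with hs | hs
      · exact href2 (a (t-1)) (a t) (a t) (fun z => g (a t) < g z)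
          (hjlt t ht1 (by omega)) (Or.inr rfl) (hIoosubIcc t ht1 (by omega))
          (fun z hz => not_lt.2 (hs z hz).le) (Or.inl h)
      · exact href2 (a t) (a (t+1)) (a t) (fun z => g (a t) < g z)
          (hjlt' t ht2) (Or.inl rfl) (hIoosubIcc' t ht2)
          (fun z hz => not_lt.2 (hs z hz).le) (Or.inl h)
  -- side monotonicity forced by membership in CM
  have hCM_side : ∀ t, 0 < t → t < k → a t ∈ CM →
      g (a (t-1)) < g (a t) ∧ g (a (t+1)) < g (a t) := by
    intro t ht1 ht2 hp
    rw [hCM] at hp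
    obtain ⟨_, _, hev⟩ := hp
    constructor
    · rcases hpieceCC t ht1 (by omega) with hm | hm
      · exact hm (Set.left_mem_Icc.2 (hjlt t ht1 (by omega)).le)
          (Set.right_mem_Icc.2 (hjlt t ht1 (by omega)).le) (hjlt t ht1 (by omega))
      · exfalso
        refine href2 (a (t-1)) (a t) (a t) (fun z => g z < g (a t))
          (hjlt t ht1 (by omega)) (Or.inr rfl) (hIoosubIcc t ht1 (by omega)) ?_ (Or.inl hev)
        intro z hz
        exact not_lt.2 (hm (Set.Ioo_subset_Icc_self hz)
          (Set.right_mem_Icc.2 (hjlt t ht1 (by omega)).le) hz.2).le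
    · have hmono := hpieceCC (t+1) (by omega) (by omega)
      simp only [Nat.add_sub_cancel] at hmono
      rcases hmono with hm | hm
      · exfalso
        refine href2 (a t) (a (t+1)) (a t) (fun z => g z < g (a t))
          (hjlt' t ht2) (Or.inl rfl) (hIoosubIcc' t ht2) ?_ (Or.inl hev)
        intro z hz
        exact not_lt.2 (hm (Set.left_mem_Icc.2 (hjlt' t ht2).le)
          (Set.Ioo_subset_Icc_self hz) hz.1).le
      · exact hm (Set.left_mem_Icc.2 (hjlt' t ht2).le)
          (Set.right_mem_Icc.2 (hjlt' t ht2).le) (hjlt' t ht2)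
  -- side monotonicity forced by membership of endpoints in EM
  have hEMα_side : α ∈ EM → g (a 1) < g (a 0) := by
    intro hp
    rw [hEM] at hp
    obtain ⟨_, _, hev⟩ := hp
    rcases hpiece1 with hm | hm
    · exfalso
      refine href2 (a 0) (a 1) α (fun z => g z ≤ g α) (h01) (Or.inl ha0.symm)
        (fun z hz => hIoo1sub hz) ?_ (Or.inr hev)
      intro z hz
      have := hm (Set.left_mem_Icc.2 h01.le) (Set.Ioo_subset_Icc_self hz) hz.1
      rw [ha0] at this
      exact not_le.2 this
    · exact hm (Set.left_mem_Icc.2 h01.le) (Set.right_mem_Icc.2 h01.le) h01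
  have hEMβ_side : β ∈ EM → g (a (k-1)) < g (a k) := by
    intro hp
    rw [hEM] at hp
    obtain ⟨_, _, hev⟩ := hp
    rcases hpieceCC k hk le_rfl with hm | hm
    · exact hm (Set.left_mem_Icc.2 hk1.le) (Set.right_mem_Icc.2 hk1.le) hk1
    · exfalso
      refine href2 (a (k-1)) (a k) β (fun z => g z ≤ g β) (hk1) (Or.inr hak.symm)
        (fun z hz => hIooksub hz) ?_ (Or.inr hev)
      intro z hz
      have := hm (Set.Ioo_subset_Icc_self hz) (Set.right_mem_Icc.2 hk1.le) hz.2
      rw [hak] at this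
      exact not_le.2 this

  -- classification of the argmax endpoint
  have hφmem : ∀ j ∈ J2, φ j ∈ CM ∪ EM := by
    intro j hj
    obtain ⟨h1, h2, hM⟩ := hJ2spec j hj
    rcases hJ2cases j hj with ⟨hcj, hlt⟩ | ⟨hcj, hlt⟩
    · have hφj : φ j = a j := by simp only [hφdef]; rw [if_pos hcj]
      rw [hφj]
      have hmax : max (g (a (j-1))) (g (a j)) = g (a j) :=
        max_eq_right (by rw [hcj]; exact hlt.le)
      have hbelow : ∀ z ∈ Set.Ioo (a (j-1)) (a j), g z < g (a j) := by
        intro z hz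
        have := (hval j h1 h2 z hz).2
        rwa [hmax] at this
      by_cases hjk : j = k
      · right
        rw [hjk]
        rw [hak]
        exact hEMβ (hjk ▸ hcj) (hjk ▸ hlt)
      · left
        exact hCMof j (by omega) (by omega) hcj (Or.inl hbelow)
    · have hne : g (a j) ≠ b i := ne_of_lt hlt
      have hφj : φ j = a (j-1) := by simp only [hφdef]; rw [if_neg hne]
      rw [hφj]
      have hmax : max (g (a (j-1))) (g (a j)) = g (a (j-1)) :=
        max_eq_left (by rw [hcj]; exact hlt.le)
      have hbelow : ∀ z ∈ Set.Ioo (a (j-1)) (a j), g z < g (a (j-1)) := by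
        intro z hz
        have := (hval j h1 h2 z hz).2
        rwa [hmax] at this
      by_cases hj1 : j = 1
      · right
        rw [hj1]
        have : a (1-1 : ℕ) = α := by simpa using ha0
        rw [this]
        refine hEMα ?_ ?_
        · have := hcj; rw [hj1] at this; simpa using this
        · have := hlt; rw [hj1] at this; simpa using this
      · left
        have hidx : j - 1 + 1 = j := by omega
        refine hCMof (j-1) (by omega) (by omega) hcj (Or.inr ?_)
        rw [hidx]
        exact hbelow
  -- fibers over CM points
  have hCMfiber : ∀ p ∈ CM, ∃ t, 0 < t ∧ t < k ∧ p = a t ∧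
      J2.filter (fun j => φ j = p) = ({t, t+1} : Finset ℕ) := by
    intro p hp
    have hpIoo := hCMIoo p hp
    obtain ⟨t, ht1, ht2, rfl⟩ : ∃ t, 0 < t ∧ t < k ∧ p = a t := by
      rcases hloc p hpIoo with ⟨j, h1, h2, hj⟩ | h
      · exfalso
        have := hp; rw [hCM] at this
        exact (hopen_not j h1 h2 p hj).2 this.2.2
      · exact h
    have hgp : g (a t) = b i := by rw [hCM] at hp; exact hp.2.1
    obtain ⟨hside1, hside2⟩ := hCM_side t ht1 ht2 hp
    have htJ2 : t ∈ J2 := by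
      rw [hJ2, Finset.mem_filter, Finset.mem_Icc]
      exact ⟨⟨ht1, by omega⟩, by rw [max_eq_right hside1.le]; exact hgp⟩
    have ht1J2 : t+1 ∈ J2 := by
      rw [hJ2, Finset.mem_filter, Finset.mem_Icc]
      refine ⟨⟨by omega, by omega⟩, ?_⟩
      simp only [Nat.add_sub_cancel]
      rw [max_eq_left hside2.le]; exact hgp
    have hφt : φ t = a t := by simp only [hφdef]; rw [if_pos hgp]
    have hφt1 : φ (t+1) = a t := by
      have hne : g (a (t+1)) ≠ b i := ne_of_lt (lt_of_lt_of_eq hside2 hgp)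
      simp only [hφdef]; rw [if_neg hne]; simp
    refine ⟨t, ht1, ht2, rfl, ?_⟩
    ext j
    rw [Finset.mem_filter, Finset.mem_insert, Finset.mem_singleton]
    constructor
    · rintro ⟨hjJ2, hφj⟩
      obtain ⟨hj1, hjk, _⟩ := hJ2spec j hjJ2
      by_cases hc : g (a j) = b i
      · left
        have he : φ j = a j := by simp only [hφdef]; rw [if_pos hc]
        rw [he] at hφj
        exact ha_inj j t hjk (by omega) hφj
      · have he : φ j = a (j-1) := by simp only [hφdef]; rw [if_neg hc]
        rw [he] at hφj
        have := ha_inj (j-1) t (by omega) (by omega) hφj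
        right; omega
    · rintro (rfl | rfl)
      · exact ⟨htJ2, hφt⟩
      · exact ⟨ht1J2, hφt1⟩
  -- fibers over EM points
  have hEMfiber : ∀ p ∈ EM, ∃ j0, J2.filter (fun j => φ j = p) = ({j0} : Finset ℕ) := by
    intro p hp
    rcases hEMend p hp with hxa | hxb
    · rw [hxa] at hp ⊢
      have hside := hEMα_side hp
      have hg0 : g (a 0) = b i := by
        rw [hEM] at hp
        rw [ha0]; exact hp.2.1
      have h1J2 : 1 ∈ J2 := by
        rw [hJ2, Finset.mem_filter, Finset.mem_Icc]
        refine ⟨⟨le_rfl, hk⟩, ?_⟩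
        have : (1:ℕ) - 1 = 0 := rfl
        rw [this, max_eq_left hside.le]
        exact hg0
      have hφ1 : φ 1 = α := by
        have hne : g (a 1) ≠ b i := ne_of_lt (lt_of_lt_of_eq hside hg0)
        simp only [hφdef]; rw [if_neg hne]; simpa using ha0
      refine ⟨1, ?_⟩
      ext j
      rw [Finset.mem_filter, Finset.mem_singleton]
      constructor
      · rintro ⟨hjJ2, hφj⟩
        obtain ⟨hj1, hjk, _⟩ := hJ2spec j hjJ2
        by_cases hc : g (a j) = b i
        · have he : φ j = a j := by simp only [hφdef]; rw [if_pos hc]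
          rw [he] at hφj
          have := ha_inj j 0 hjk (by omega) (by rw [hφj, ha0])
          omega
        · have he : φ j = a (j-1) := by simp only [hφdef]; rw [if_neg hc]
          rw [he] at hφj
          have := ha_inj (j-1) 0 (by omega) (by omega) (by rw [hφj, ha0])
          omega
      · rintro rfl
        exact ⟨h1J2, hφ1⟩
    · rw [hxb] at hp ⊢
      have hside := hEMβ_side hp
      have hgk : g (a k) = b i := by
        rw [hEM] at hp
        rw [hak]; exact hp.2.1
      have hkJ2 : k ∈ J2 := by
        rw [hJ2, Finset.mem_filter, Finset.mem_Icc]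
        exact ⟨⟨hk, le_rfl⟩, by rw [max_eq_right hside.le]; exact hgk⟩
      have hφk : φ k = β := by
        simp only [hφdef]; rw [if_pos hgk]; exact hak
      refine ⟨k, ?_⟩
      ext j
      rw [Finset.mem_filter, Finset.mem_singleton]
      constructor
      · rintro ⟨hjJ2, hφj⟩
        obtain ⟨hj1, hjk, _⟩ := hJ2spec j hjJ2
        by_cases hc : g (a j) = b i
        · have he : φ j = a j := by simp only [hφdef]; rw [if_pos hc]
          rw [he] at hφj
          exact ha_inj j k hjk le_rfl (by rw [hφj, hak])
        · have he : φ j = a (j-1) := by simp only [hφdef]; rw [if_neg hc]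
          rw [he] at hφj
          have := ha_inj (j-1) k (by omega) le_rfl (by rw [hφj, hak])
          omega
      · rintro rfl
        exact ⟨hkJ2, hφk⟩
  -- image of J2 under φ
  have himg : J2.image φ = hCMfin.toFinset ∪ hEMfin.toFinset := by
    ext p
    rw [Finset.mem_union, Finset.mem_image, Set.Finite.mem_toFinset, Set.Finite.mem_toFinset]
    constructor
    · rintro ⟨j, hj, rfl⟩
      exact hφmem j hj
    · rintro (h | h)
      · obtain ⟨t, _, _, hpt, hfil⟩ := hCMfiber p h
        have : t ∈ J2.filter (fun j => φ j = p) := by rw [hfil]; simp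
        rw [Finset.mem_filter] at this
        exact ⟨t, this.1, this.2⟩
      · obtain ⟨j0, hfil⟩ := hEMfiber p h
        have : j0 ∈ J2.filter (fun j => φ j = p) := by rw [hfil]; simp
        rw [Finset.mem_filter] at this
        exact ⟨j0, this.1, this.2⟩
  have hdisjT : Disjoint hCMfin.toFinset hEMfin.toFinset := by
    rw [Finset.disjoint_left]
    intro p hp hp'
    exact hend_not_int p (hEMend p (hEMfin.mem_toFinset.1 hp')) (hCMIoo p (hCMfin.mem_toFinset.1 hp))
  have hJ2card : J2.card = 2 * CM.ncard + EM.ncard := by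
    rw [Finset.card_eq_sum_card_image φ J2, himg, Finset.sum_union hdisjT]
    have hs1 : ∀ p ∈ hCMfin.toFinset, (J2.filter (fun j => φ j = p)).card = 2 := by
      intro p hp
      obtain ⟨t, _, _, hpt, hfil⟩ := hCMfiber p (hCMfin.mem_toFinset.1 hp)
      rw [hfil, Finset.card_insert_of_notMem (by simp only [Finset.mem_singleton]; omega),
        Finset.card_singleton]
    have hs2 : ∀ p ∈ hEMfin.toFinset, (J2.filter (fun j => φ j = p)).card = 1 := by
      intro p hp
      obtain ⟨j0, hfil⟩ := hEMfiber p (hEMfin.mem_toFinset.1 hp)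
      rw [hfil, Finset.card_singleton]
    rw [Finset.sum_congr rfl hs1, Finset.sum_congr rfl hs2, Finset.sum_const, Finset.sum_const,
      smul_eq_mul, smul_eq_mul, mul_one, Set.ncard_eq_toFinset_card CM hCMfin,
      Set.ncard_eq_toFinset_card EM hEMfin]
    ring
  -- conclusion
  have hJJdisj : Disjoint J1 J2 := by
    rw [Finset.disjoint_left]
    intro j hj hj'
    have ha1 := (hJ1spec j hj).2.2.2
    have ha2 := (hJ2spec j hj').2.2
    rw [ha2] at ha1
    exact lt_irrefl _ ha1
  have hIdxcard : (IdxSet g a k y).ncard = J1.card + J2.card := by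
    rw [hIdx, Set.ncard_coe_finset, Finset.card_union_of_disjoint hJJdisj]
  rw [hIdxcard, hFcard, hRcard, hJ2card]
  push_cast
  ring
end

section
/- Let y ∈ (b_{i−1}, b_i) for some i ∈ {1,…,ℓ}, and let j ∈ I(y) with h_j = (g restricted to (α_{j−1}, α_j))⁻¹ the local inverse of g on the j-th monotonicity piece. Then h_j is differentiable at y and |h_j′(y)| = η′(u_j(y)); that is, the absolute derivative of every local inverse of g equals the derivative of the single unfolded inverse η evaluated at the corresponding unfolded point. -/
/-- The partial sums `m_j = |λ_1| + ⋯ + |λ_j|` of the absolute increments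
`λ_i = g(α_i) - g(α_{i-1})`. -/
noncomputable def mseq (g : ℝ → ℝ) (a : ℕ → ℝ) : ℕ → ℝ :=
  fun j => ∑ i ∈ Finset.range j, |g (a (i + 1)) - g (a i)|

/-!
On the `j`-th piece `[p, q] = [α_{j-1}, α_j]` the derivative `g'` does not vanish inside, so by
Darboux's theorem it has a constant sign `σ = sign λ_j` and `g` is strictly monotone there. Since
`y` avoids `B = g(A)`, the point `h_j(y)` is interior to the piece; `h_j` is continuous at `y`
(a local inverse of a continuous injection on a compact set), so the inverse function rule gives
`h_j'(y) = 1 / g'(h_j(y))`. On the piece, `ĝ(h_j(z)) = m_{j-1} + |z - g(p)| = u_j(z)` is affine in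
`z` with slope `σ`, hence `η = h_j ∘ u_j⁻¹` near `u_j(y)` and
`η'(u_j(y)) = σ / g'(h_j(y)) = |h_j'(y)|`.
-/

open Set Filter Topology

theorem continuousAt_of_local_left_inverse_of_injOn {X Y : Type*} [TopologicalSpace X]
    [TopologicalSpace Y] [T2Space Y] {g : X → Y} {h : Y → X} {K : Set X} {y : Y}
    (hK : IsCompact K) (hgc : ContinuousOn g K) (hgi : InjOn g K)
    (hh : ∀ᶠ z in 𝓝 y, h z ∈ K ∧ g (h z) = z) : ContinuousAt h y := by
  obtain ⟨hyK, hgy⟩ := hh.self_of_nhds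
  have hmapK : map h (𝓝 y) ≤ 𝓟 K := le_principal_iff.2 (hh.mono fun _ ↦ And.left)
  refine hK.tendsto_nhds_of_unique_mapClusterPt (hh.mono fun _ ↦ And.left)
    fun x hxK hx ↦ hgi hxK hyK ?_
  have hgx : MapClusterPt (g x) (𝓝 y) (g ∘ h) :=
    hx.tendsto_comp' ((hgc x hxK).mono_left (inf_le_inf_left _ hmapK))
  have hid : MapClusterPt (g x) (𝓝 y) id := hgx.congrFun (hh.mono fun _ hz ↦ hz.2)
  rw [hgy]
  exact eq_of_nhds_neBot (mapClusterPt_id_iff.1 hid)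

theorem Real.abs_eq_mul_sign (r : ℝ) : |r| = r * Real.sign r := by
  rcases lt_trichotomy r 0 with hr | rfl | hr
  · rw [abs_of_neg hr, Real.sign_of_neg hr, mul_neg_one]
  · simp
  · rw [abs_of_pos hr, Real.sign_of_pos hr, mul_one]

theorem HasDerivAt.of_eventually_comp_affine {e h : ℝ → ℝ} {m c s d y : ℝ} (hs : s ≠ 0)
    (heq : ∀ᶠ z in 𝓝 y, e (m + (z - c) * s) = h z) (hh : HasDerivAt h d y) :
    HasDerivAt e (d * s⁻¹) (m + (y - c) * s) := by
  have hψ : HasDerivAt (fun v ↦ c + (v - m) * s⁻¹) s⁻¹ (m + (y - c) * s) :=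
    ((((hasDerivAt_id' _).sub_const m).mul_const s⁻¹).const_add c).congr_deriv (one_mul _)
  have hψy : c + (m + (y - c) * s - m) * s⁻¹ = y := by field_simp; ring
  refine (HasDerivAt.comp _ (hψy ▸ hh) hψ).congr_of_eventuallyEq ?_
  filter_upwards [(hψy ▸ hψ.continuousAt.tendsto).eventually heq] with v hv
  rw [Function.comp_apply, ← hv]
  congr 1
  field_simp; ring

theorem StrictMonoOn.apply_notMem_Ioo_sub_one {α : Type*} [Preorder α] {b : ℕ → α} {ℓ i r : ℕ}
    (hb : StrictMonoOn b (Iic ℓ)) (hi : i ≤ ℓ) (hr : r ≤ ℓ) : b r ∉ Ioo (b (i - 1)) (b i) := by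
  rintro ⟨h₁, h₂⟩
  rw [hb.lt_iff_lt (mem_Iic.2 (by omega)) (mem_Iic.2 hr)] at h₁
  rw [hb.lt_iff_lt (mem_Iic.2 hr) (mem_Iic.2 hi)] at h₂
  omega

section Piece

variable {g g' h : ℝ → ℝ} {p q c d : ℝ}

theorem strictMonoOn_or_strictAntiOn_of_hasDerivAt_ne_zero
    (hc : ContinuousOn g (Icc p q)) (hd : ∀ x ∈ Ioo p q, HasDerivAt g (g' x) x)
    (hne : ∀ x ∈ Ioo p q, g' x ≠ 0) :
    (StrictMonoOn g (Icc p q) ∧ ∀ x ∈ Ioo p q, 0 < g' x) ∨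
      (StrictAntiOn g (Icc p q) ∧ ∀ x ∈ Ioo p q, g' x < 0) := by
  have hd' : ∀ x ∈ interior (Icc p q), HasDerivWithinAt g (g' x) (interior (Icc p q)) x := by
    simpa only [interior_Icc] using fun x hx ↦ (hd x hx).hasDerivWithinAt
  rcases hasDerivWithinAt_forall_lt_or_forall_gt_of_forall_ne (convex_Ioo p q)
    (fun x hx ↦ (hd x hx).hasDerivWithinAt) hne with hneg | hpos
  · exact .inr ⟨strictAntiOn_of_hasDerivWithinAt_neg (convex_Icc p q) hc hd'
      (by simpa only [interior_Icc] using hneg), hneg⟩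
  · exact .inl ⟨strictMonoOn_of_hasDerivWithinAt_pos (convex_Icc p q) hc hd'
      (by simpa only [interior_Icc] using hpos), hpos⟩

theorem sign_sub_eq_sign_deriv {x ξ : ℝ}
    (hc : ContinuousOn g (Icc p q)) (hd : ∀ x ∈ Ioo p q, HasDerivAt g (g' x) x)
    (hne : ∀ x ∈ Ioo p q, g' x ≠ 0) (hx : x ∈ Ioc p q) (hξ : ξ ∈ Ioo p q) :
    Real.sign (g x - g p) = Real.sign (g' ξ) := by
  have hp : p ∈ Icc p q := ⟨le_rfl, hx.1.le.trans hx.2⟩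
  rcases strictMonoOn_or_strictAntiOn_of_hasDerivAt_ne_zero hc hd hne with
    ⟨hmono, hpos⟩ | ⟨hanti, hneg⟩
  · rw [Real.sign_of_pos (sub_pos.2 (hmono hp (Ioc_subset_Icc_self hx) hx.1)),
      Real.sign_of_pos (hpos ξ hξ)]
  · rw [Real.sign_of_neg (sub_neg.2 (hanti hp (Ioc_subset_Icc_self hx) hx.1)),
      Real.sign_of_neg (hneg ξ hξ)]

theorem mapsTo_Ioo_of_left_inverse (hh : ∀ z ∈ Ioo c d, h z ∈ Icc p q ∧ g (h z) = z)
    (hgp : g p ∉ Ioo c d) (hgq : g q ∉ Ioo c d) : MapsTo h (Ioo c d) (Ioo p q) := fun z hz ↦ by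
  obtain ⟨⟨hpz, hzq⟩, hgz⟩ := hh z hz
  refine ⟨hpz.lt_of_ne ?_, hzq.lt_of_ne ?_⟩ <;> rintro rfl
  exacts [hgp (by rwa [hgz]), hgq (by rwa [hgz])]

theorem hasDerivAt_of_left_inverse_on_Icc {y : ℝ}
    (hc : ContinuousOn g (Icc p q)) (hd : ∀ x ∈ Ioo p q, HasDerivAt g (g' x) x)
    (hne : ∀ x ∈ Ioo p q, g' x ≠ 0) (hh : ∀ z ∈ Ioo c d, h z ∈ Icc p q ∧ g (h z) = z)
    (hy : y ∈ Ioo c d) (hhy : h y ∈ Ioo p q) :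
    HasDerivAt h (g' (h y))⁻¹ y := by
  have hinj : InjOn g (Icc p q) := by
    rcases strictMonoOn_or_strictAntiOn_of_hasDerivAt_ne_zero hc hd hne with hg | hg
    exacts [hg.1.injOn, hg.1.injOn]
  have hloc : ∀ᶠ z in 𝓝 y, h z ∈ Icc p q ∧ g (h z) = z :=
    eventually_of_mem (Ioo_mem_nhds hy.1 hy.2) hh
  exact .of_local_left_inverse
    (continuousAt_of_local_left_inverse_of_injOn isCompact_Icc hc hinj hloc) (hd _ hhy)
    (hne _ hhy) (hloc.mono fun _ hz ↦ hz.2)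

theorem exists_abs_deriv_left_inverse_eq_deriv_unfolding {G e : ℝ → ℝ} {m y : ℝ}
    (hc : ContinuousOn g (Icc p q)) (hd : ∀ x ∈ Ioo p q, HasDerivAt g (g' x) x)
    (hne : ∀ x ∈ Ioo p q, g' x ≠ 0) (hh : ∀ z ∈ Ioo c d, h z ∈ Icc p q ∧ g (h z) = z)
    (hgp : g p ∉ Ioo c d) (hgq : g q ∉ Ioo c d)
    (hG : ∀ x ∈ Icc p q, G x = m + |g x - g p|) (heG : ∀ x ∈ Icc p q, e (G x) = x)
    (hy : y ∈ Ioo c d) :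
    ∃ d₁ d₂ : ℝ, HasDerivAt h d₁ y ∧
      HasDerivAt e d₂ (m + (y - g p) * Real.sign (g q - g p)) ∧ |d₁| = d₂ := by
  have hIoo := mapsTo_Ioo_of_left_inverse hh hgp hgq
  have hsign : ∀ z ∈ Ioo c d, Real.sign (z - g p) = Real.sign (g' (h y)) := fun z hz ↦
    (hh z hz).2 ▸ sign_sub_eq_sign_deriv hc hd hne (Ioo_subset_Ioc_self (hIoo hz)) (hIoo hy)
  have hdh := hasDerivAt_of_left_inverse_on_Icc hc hd hne hh hy (hIoo hy)
  have hunfold : ∀ᶠ z in 𝓝 y, e (m + (z - g p) * Real.sign (g' (h y))) = h z := by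
    filter_upwards [Ioo_mem_nhds hy.1 hy.2] with z hz
    obtain ⟨hzm, hgz⟩ := hh z hz
    have hGz : G (h z) = m + |z - g p| := by rw [hG _ hzm, hgz]
    rw [← hsign z hz, ← Real.abs_eq_mul_sign, ← hGz, heG _ hzm]
  rw [sign_sub_eq_sign_deriv hc hd hne ⟨(hIoo hy).1.trans (hIoo hy).2, le_rfl⟩ (hIoo hy)]
  refine ⟨_, _, hdh, hdh.of_eventually_comp_affine ?_ hunfold, ?_⟩
  · exact Real.sign_eq_zero_iff.not.2 (hne _ (hIoo hy))
  · rw [Real.inv_sign, Real.abs_eq_mul_sign, Real.sign_inv]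

end Piece

theorem stmt14_general
    (α β : ℝ)
    (k : ℕ)
    (a : ℕ → ℝ) (ha0 : a 0 = α) (hak : a k = β)
    (hamono : ∀ j < k, a j < a (j + 1))
    (g g' : ℝ → ℝ)
    (hderiv : ∀ x ∈ Set.Icc α β, HasDerivWithinAt g (g' x) (Set.Icc α β) x)
    (hg'ne : ∀ j, 1 ≤ j → j ≤ k → ∀ x ∈ Set.Ioo (a (j - 1)) (a j), g' x ≠ 0)
    (ℓ : ℕ) (b : ℕ → ℝ)
    (hbmono : ∀ i < ℓ, b i < b (i + 1))
    (hB : g '' {x | ∃ j ≤ k, a j = x} = {y | ∃ i ≤ ℓ, b i = y})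
    (G : ℝ → ℝ)
    (hG : ∀ j, 1 ≤ j → j ≤ k → ∀ x ∈ Set.Icc (a (j - 1)) (a j),
      G x = mseq g a (j - 1) + |g x - g (a (j - 1))|)
    (e : ℝ → ℝ)
    (heG : ∀ x ∈ Set.Icc α β, e (G x) = x)
    (i : ℕ) (hiℓ : i ≤ ℓ)
    (y : ℝ) (hy : y ∈ Set.Ioo (b (i - 1)) (b i))
    (j : ℕ) (hj : j ∈ IdxSet g a k y)
    (h : ℝ → ℝ)
    (hh : ∀ z ∈ Set.Ioo (b (i - 1)) (b i),
      h z ∈ Set.Icc (a (j - 1)) (a j) ∧ g (h z) = z) :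
    ∃ d₁ d₂ : ℝ, HasDerivAt h d₁ y ∧
      HasDerivAt e d₂
        (mseq g a (j - 1) + (y - g (a (j - 1))) * Real.sign (g (a j) - g (a (j - 1)))) ∧
      |d₁| = d₂ := by
  obtain ⟨hj1, hjk, -⟩ := hj
  have ha : StrictMonoOn a (Iic k) := strictMonoOn_Iic_of_lt_succ hamono
  have hb : StrictMonoOn b (Iic ℓ) := strictMonoOn_Iic_of_lt_succ hbmono
  have hsub : Icc (a (j - 1)) (a j) ⊆ Icc α β := Icc_subset_Icc
    (ha0 ▸ ha.monotoneOn (mem_Iic.2 (Nat.zero_le k)) (mem_Iic.2 (by omega)) (Nat.zero_le _))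
    (hak ▸ ha.monotoneOn (mem_Iic.2 hjk) (mem_Iic.2 le_rfl) hjk)
  have hd : ∀ x ∈ Ioo (a (j - 1)) (a j), HasDerivAt g (g' x) x := fun x hx ↦
    (hderiv x (hsub (Ioo_subset_Icc_self hx))).hasDerivAt
      (mem_of_superset (Ioo_mem_nhds hx.1 hx.2) (Ioo_subset_Icc_self.trans hsub))
  have hgap : ∀ n ≤ k, g (a n) ∉ Ioo (b (i - 1)) (b i) := fun n hn ↦ by
    obtain ⟨r, hr, hbr⟩ : g (a n) ∈ {y | ∃ i ≤ ℓ, b i = y} := hB ▸ ⟨a n, ⟨n, hn, rfl⟩, rfl⟩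
    exact hbr ▸ hb.apply_notMem_Ioo_sub_one hiℓ hr
  exact exists_abs_deriv_left_inverse_eq_deriv_unfolding
    (fun x hx ↦ (hderiv x (hsub hx)).continuousWithinAt.mono hsub) hd (hg'ne j hj1 hjk) hh
    (hgap (j - 1) (by omega)) (hgap j hjk) (hG j hj1 hjk) (fun x hx ↦ heG x (hsub hx)) hy

theorem stmt14
    (α β : ℝ) (hαβ : α < β)
    (k : ℕ) (hk : 0 < k)
    (a : ℕ → ℝ) (ha0 : a 0 = α) (hak : a k = β)
    (hamono : ∀ j < k, a j < a (j + 1))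
    (g g' : ℝ → ℝ)
    (hderiv : ∀ x ∈ Set.Icc α β, HasDerivWithinAt g (g' x) (Set.Icc α β) x)
    (hg'cont : ContinuousOn g' (Set.Icc α β))
    (hpiece : ∀ j, 1 ≤ j → j ≤ k →
      StrictMonoOn g (Set.Ioo (a (j - 1)) (a j)) ∨ StrictAntiOn g (Set.Ioo (a (j - 1)) (a j)))
    (hg'ne : ∀ j, 1 ≤ j → j ≤ k → ∀ x ∈ Set.Ioo (a (j - 1)) (a j), g' x ≠ 0)
    (hcrit : ∀ j, 0 < j → j < k → g' (a j) = 0 ∧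
      ((∀ᶠ x in nhdsWithin (a j) (Set.Icc α β \ {a j}), g x < g (a j)) ∨
       (∀ᶠ x in nhdsWithin (a j) (Set.Icc α β \ {a j}), g (a j) < g x)))
    (ℓ : ℕ) (b : ℕ → ℝ)
    (hbmono : ∀ i < ℓ, b i < b (i + 1))
    (hB : g '' {x | ∃ j ≤ k, a j = x} = {y | ∃ i ≤ ℓ, b i = y})
    (G : ℝ → ℝ)
    (hG : ∀ j, 1 ≤ j → j ≤ k → ∀ x ∈ Set.Icc (a (j - 1)) (a j),
      G x = mseq g a (j - 1) + |g x - g (a (j - 1))|)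
    (e : ℝ → ℝ)
    (heG : ∀ x ∈ Set.Icc α β, e (G x) = x)
    (hGe : ∀ u ∈ Set.Icc 0 (mseq g a k), G (e u) = u)
    (i : ℕ) (hi1 : 1 ≤ i) (hiℓ : i ≤ ℓ)
    (y : ℝ) (hy : y ∈ Set.Ioo (b (i - 1)) (b i))
    (j : ℕ) (hj : j ∈ IdxSet g a k y)
    (h : ℝ → ℝ)
    (hh : ∀ z ∈ Set.Ioo (b (i - 1)) (b i),
      h z ∈ Set.Icc (a (j - 1)) (a j) ∧ g (h z) = z) :
    ∃ d₁ d₂ : ℝ, HasDerivAt h d₁ y ∧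
      HasDerivAt e d₂
        (mseq g a (j - 1) + (y - g (a (j - 1))) * Real.sign (g (a j) - g (a (j - 1)))) ∧
      |d₁| = d₂ :=
  stmt14_general α β k a ha0 hak hamono g g' hderiv hg'ne ℓ b hbmono hB G hG e heG i hiℓ y hy j hj h
    hh
end
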